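/- Let L = 1 and weight (a,b) ∈ R². Define the subdivision SD_n : K_n(X) → K_n(X) by SD_n(T) = Σ_{e ∈ E^n} Σ_{v ∈ V_{e,n}} (−Π_{i=1}^n v_i) · ‖T‖_{1/3, e, v}, where ‖T‖_{1/3,e,v}(x) = T((e₁+v₁x₁)/3, …, (e_n+v_n x_n)/3), E = {0,2}, and V_{e,n} consists of v ∈ {−1,1}ⁿ with v_i = 1 whenever e_i = 0. Then SD commutes with the weighted boundary operator: ∂_n ∘ SD_n = SD_{n-1} ∘ ∂_n for all n ≥ 0 (with SD₋₁ = 0 and SD₀(T) = −T). -/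

import Mathlib

open scoped BigOperators

noncomputable section

/-- The `n`-dimensional unit cube. -/
abbrev Cube (n : ℕ) : Type := Fin n → unitInterval

/-- The point `i/L` of the unit interval, for `i ∈ {0,…,L}`. -/
def vertexVal (L : ℕ) (i : Fin (L + 1)) : unitInterval :=
  ⟨(i : ℝ) / L, ⟨by positivity,
    div_le_one_of_le₀ (by exact_mod_cast Fin.is_le i) (Nat.cast_nonneg L)⟩⟩

/-- Insertion of the constant `c` at the `j`-th coordinate. -/
def faceMap {n : ℕ} (j : Fin (n + 1)) (c : unitInterval) : C(Cube n, Cube (n + 1)) :=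
  ⟨fun x => j.insertNth c x, (continuous_const : Continuous fun _ : Cube n => c).finInsertNth j continuous_id⟩

/-- The face `⟨T⟩_{n,·,j}` of a singular cube at value `c` in direction `j`. -/
def face {X : Type} [TopologicalSpace X] {n : ℕ} (T : C(Cube (n + 1), X)) (j : Fin (n + 1))
    (c : unitInterval) : C(Cube n, X) :=
  T.comp (faceMap j c)

/-- The module of cubical `n`-chains: the free `R`-module on the continuous maps `Iⁿ → X`. -/
abbrev Kmod (R : Type) [CommRing R] (X : Type) [TopologicalSpace X] (n : ℕ) : Type :=
  C(Cube n, X) →₀ R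

/-- The weighted boundary operator. -/
def bdry (R : Type) [CommRing R] {L : ℕ} (m : Fin (L + 1) → R) (X : Type) [TopologicalSpace X]
    (n : ℕ) : Kmod R X (n + 1) →ₗ[R] Kmod R X n :=
  Finsupp.lift (Kmod R X n) R C(Cube (n + 1), X) fun T =>
    ∑ j : Fin (n + 1), ∑ i : Fin (L + 1),
      ((-1 : R) ^ (j : ℕ) * m i) • Finsupp.single (face T j (vertexVal L i)) (1 : R)


/-- The three coordinate patterns `(e,v) ∈ {(0,1), (2,1), (2,-1)}` occurring in the
subdivision (pairs with `e ∈ E = {0,2}`, `v ∈ V = {-1,1}`, and `v = 1` whenever `e = 0`). -/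
def evE : Fin 3 → ℕ := ![0, 2, 2]

def evV : Fin 3 → ℤ := ![1, 1, -1]

/-- The affine contraction `x ↦ (e + v·x)/3` of the cube into itself, one pattern per
coordinate; this realizes `‖T‖_{1/3,e,v}` as `T ∘ subCubeMap z`. -/
def subCubeMap {n : ℕ} (z : Fin n → Fin 3) : C(Cube n, Cube n) :=
  ⟨fun x i => Set.projIcc (0 : ℝ) 1 zero_le_one
      (((evE (z i) : ℝ) + (evV (z i) : ℝ) * (x i : ℝ)) / 3), by
    refine continuous_pi fun i => continuous_projIcc.comp ?_
    exact ((continuous_const.add (continuous_const.mul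
      (continuous_subtype_val.comp (continuous_apply i)))).div_const 3)⟩

/-- The subdivision operator
`SD_n(T) = Σ_{e∈Eⁿ} Σ_{v∈V_{e,n}} (−Π v_i) · ‖T‖_{1/3,e,v}`
(indexed here by `z : Fin n → Fin 3` enumerating the admissible pairs `(e,v)`). -/
def SD (R : Type) [CommRing R] (X : Type) [TopologicalSpace X] (n : ℕ) :
    Kmod R X n →ₗ[R] Kmod R X n :=
  Finsupp.lift (Kmod R X n) R C(Cube n, X) fun T =>
    ∑ z : Fin n → Fin 3,
      ((-(∏ i, evV (z i)) : ℤ) : R) • Finsupp.single (T.comp (subCubeMap z)) (1 : R)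

/-! Splitting the index `z : Fin (n+1) → Fin 3` of `SD` at a face direction `j` as
`z = insertNth j p w`, the face of the sub-cube `‖T‖_z` in direction `j` at value `c` is the
face of `T` at `(e_p + v_p c)/3`, subdivided along `w`, with sign `v_p` times the sign of `w`.
At a vertex `c ∈ {0,1}` one pattern `p` returns `c` with sign `+1`, and the other two return the
same point (`2/3` if `c = 0`, `1/3` if `c = 1`) with opposite signs and cancel. So every face of
the subdivision is the subdivision of the corresponding face. -/

def subCubeCoord (p : Fin 3) (c : unitInterval) : unitInterval :=
  Set.projIcc (0 : ℝ) 1 zero_le_one (((evE p : ℝ) + (evV p : ℝ) * (c : ℝ)) / 3)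

@[simp]
lemma subCubeMap_apply {n : ℕ} (z : Fin n → Fin 3) (x : Cube n) (i : Fin n) :
    subCubeMap z x i = subCubeCoord (z i) (x i) :=
  rfl

lemma vertexVal_one_zero : vertexVal 1 0 = 0 := by
  ext; simp [vertexVal]

lemma vertexVal_one_one : vertexVal 1 1 = 1 := by
  ext; simp [vertexVal]

lemma subCubeCoord_zero_zero : subCubeCoord 0 0 = 0 := by
  ext; simp [subCubeCoord, evE, evV]

lemma subCubeCoord_one_one : subCubeCoord 1 1 = 1 := by
  ext; norm_num [subCubeCoord, evE, evV]

lemma subCubeCoord_one_zero : subCubeCoord 1 0 = subCubeCoord 2 0 := by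
  ext; simp [subCubeCoord, evE, evV]

lemma subCubeCoord_zero_one : subCubeCoord 0 1 = subCubeCoord 2 1 := by
  ext; simp [subCubeCoord, evE, evV]; norm_num

lemma sum_evV_smul_subCubeCoord_vertex {M : Type*} [AddCommGroup M] (f : unitInterval → M)
    (i : Fin 2) :
    ∑ p : Fin 3, evV p • f (subCubeCoord p (vertexVal 1 i)) = f (vertexVal 1 i) := by
  simp only [Fin.sum_univ_three, evV]
  fin_cases i
  · simp [vertexVal_one_zero, subCubeCoord_zero_zero, subCubeCoord_one_zero]
  · simp [vertexVal_one_one, subCubeCoord_one_one, subCubeCoord_zero_one]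

lemma subCubeMap_comp_faceMap {n : ℕ} (z : Fin (n + 1) → Fin 3) (j : Fin (n + 1))
    (c : unitInterval) :
    (subCubeMap z).comp (faceMap j c)
      = (faceMap j (subCubeCoord (z j) c)).comp (subCubeMap fun k => z (j.succAbove k)) := by
  ext x k : 2
  refine Fin.succAboveCases j ?_ (fun k => ?_) k <;> simp [faceMap]

section Chains

variable {R : Type} [CommRing R] {X : Type} [TopologicalSpace X]

lemma face_comp_subCubeMap {n : ℕ} (T : C(Cube (n + 1), X)) (z : Fin (n + 1) → Fin 3)
    (j : Fin (n + 1)) (c : unitInterval) :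
    face (T.comp (subCubeMap z)) j c
      = (face T j (subCubeCoord (z j) c)).comp (subCubeMap fun k => z (j.succAbove k)) := by
  simp only [face, ContinuousMap.comp_assoc, subCubeMap_comp_faceMap]

lemma SD_single {n : ℕ} (T : C(Cube n, X)) :
    SD R X n (Finsupp.single T 1)
      = ∑ z : Fin n → Fin 3,
          ((-(∏ i, evV (z i)) : ℤ) : R) • Finsupp.single (T.comp (subCubeMap z)) (1 : R) := by
  simp [SD, Finsupp.lift_apply, Finsupp.sum_single_index]

lemma bdry_single {L : ℕ} (m : Fin (L + 1) → R) {n : ℕ} (T : C(Cube (n + 1), X)) :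
    bdry R m X n (Finsupp.single T 1)
      = ∑ j : Fin (n + 1), ∑ i : Fin (L + 1),
          ((-1 : R) ^ (j : ℕ) * m i) • Finsupp.single (face T j (vertexVal L i)) (1 : R) := by
  simp [bdry, Finsupp.lift_apply, Finsupp.sum_single_index]

lemma sum_single_face_subCubeMap_eq_SD {n : ℕ} (T : C(Cube (n + 1), X)) (j : Fin (n + 1)) (i : Fin 2) :
    ∑ z : Fin (n + 1) → Fin 3, ((-(∏ k, evV (z k)) : ℤ) : R) •
        Finsupp.single (face (T.comp (subCubeMap z)) j (vertexVal 1 i)) (1 : R)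
      = SD R X n (Finsupp.single (face T j (vertexVal 1 i)) 1) := by
  rw [SD_single, ← (Fin.insertNthEquiv (fun _ => Fin 3) j).sum_comp, Fintype.sum_prod_type,
    Finset.sum_comm]
  refine Finset.sum_congr rfl fun w _ => ?_
  simp only [face_comp_subCubeMap, Fin.insertNthEquiv_apply, Fin.insertNth_apply_same,
    Fin.prod_univ_succAbove _ j, Fin.insertNth_apply_succAbove]
  rw [← sum_evV_smul_subCubeCoord_vertex
    (fun c => Finsupp.single ((face T j c).comp (subCubeMap w)) (1 : R)) i, Finset.smul_sum]
  refine Finset.sum_congr rfl fun p _ => ?_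
  rw [← Int.cast_smul_eq_zsmul R, smul_smul]
  congr 1
  push_cast
  ring

theorem bdry_comp_SD (m : Fin 2 → R) (n : ℕ) :
    (bdry R m X n).comp (SD R X (n + 1)) = (SD R X n).comp (bdry R m X n) := by
  ext T : 2
  simp only [LinearMap.comp_apply, Finsupp.lsingle_apply]
  rw [SD_single, bdry_single]
  simp only [map_sum, map_smul, bdry_single, Finset.smul_sum]
  rw [Finset.sum_comm]
  refine Finset.sum_congr rfl fun j _ => ?_
  rw [Finset.sum_comm]
  refine Finset.sum_congr rfl fun i _ => ?_
  simp only [smul_comm _ ((-1 : R) ^ (j : ℕ) * m i), ← Finset.smul_sum, sum_single_face_subCubeMap_eq_SD]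

lemma SD_zero_single (T : C(Cube 0, X)) : SD R X 0 (Finsupp.single T 1) = -Finsupp.single T 1 := by
  have hT : ∀ z : Fin 0 → Fin 3, T.comp (subCubeMap z) = T := fun z =>
    ContinuousMap.ext fun x => congrArg T (Subsingleton.elim _ _)
  simp [SD_single, hT, Finset.univ_unique]

end Chains

/-- (`L = 1`, weight `(a,b)`.) The subdivision commutes with the
weighted boundary operator: `∂_n ∘ SD_{n+1} = SD_n ∘ ∂_n` for all `n`; moreover
`SD₀(T) = −T` (and `SD₋₁ = 0`, which makes the degree-`0` case of the commutation
trivial). -/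
theorem SD_comm_bdry (R : Type) [CommRing R] (a b : R) (X : Type) [TopologicalSpace X] :
    (∀ n : ℕ, (bdry R ![a, b] X n).comp (SD R X (n + 1))
        = (SD R X n).comp (bdry R ![a, b] X n)) ∧
    (∀ T : C(Cube 0, X), SD R X 0 (Finsupp.single T 1) = -Finsupp.single T 1) :=
  ⟨bdry_comp_SD ![a, b], SD_zero_single⟩
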